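/- A type X is a P-oracle sheaf if and only if: (1) there is d : ∀ a : A, (P a → X) → X; (2) d a h = h u for all a, h : P a → X, u : P a; and (3) for all a : A and x y : X, if P a → x = y then x = y. Here 'X is a sheaf' means that for every ◯_P-dense proposition s (i.e., ◯_P s), the map X → (s → X) sending x to the constant function is an equivalence (bijection). -/

import Mathlib

/-! `Oracle P s` is an induction principle: from `◯_P s` one may conclude any `r` that follows from
`s` and is closed under every oracle `P a`, i.e. satisfies `(P a → r) → r`. Each `P a` is itself
`◯_P`-dense, so a sheaf has descent and separation along every `P a`. Conversely, separation makes
`x = y` closed, and descent together with separation makes "`f : s → X` is constant" closed, which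
gives injectivity and surjectivity of the constant map for every dense `s`. -/

def Oracle {A : Type*} (P : A → Prop) (s : Prop) : Prop :=
  ∀ r : Prop, (s → r) → (∀ a, (P a → r) → r) → r

theorem oracle_self {A : Type*} (P : A → Prop) (a : A) : Oracle P (P a) :=
  fun _ hr step => step a hr

section

variable {A : Type*} {P : A → Prop} {X : Type*}

theorem exists_descent_of_bijective_const
    (hb : ∀ a, Function.Bijective (fun (x : X) (_ : P a) => x)) :
    ∃ d : ∀ a : A, (P a → X) → X, ∀ a (h : P a → X) (u : P a), d a h = h u :=
  ⟨fun a => (Equiv.ofBijective _ (hb a)).symm,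
    fun a h u => congrFun ((Equiv.ofBijective _ (hb a)).apply_symm_apply h) u⟩

theorem Oracle.eq_of_separated (hsep : ∀ a : A, ∀ x y : X, (P a → x = y) → x = y)
    {s : Prop} (hs : Oracle P s) {x y : X} (h : s → x = y) : x = y :=
  hs _ h fun a => hsep a x y

theorem Oracle.exists_const_eq {d : ∀ a : A, (P a → X) → X}
    (hd : ∀ a (h : P a → X) (u : P a), d a h = h u)
    (hsep : ∀ a : A, ∀ x y : X, (P a → x = y) → x = y)
    {s : Prop} (hs : Oracle P s) (f : s → X) : ∃ x : X, (fun _ : s => x) = f := by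
  refine hs _ (fun u => ⟨f u, rfl⟩) fun a hf => ?_
  choose h hh using hf
  refine ⟨d a h, funext fun v => hsep a _ _ fun u => ?_⟩
  rw [hd a h u]
  exact congrFun (hh u) v

end

theorem oracle_sheaf_iff {A : Type*} (P : A → Prop) (X : Type*) :
    (∀ s : Prop, Oracle P s →
      Function.Bijective (fun (x : X) (_ : s) => x)) ↔
    (∃ d : ∀ a : A, (P a → X) → X,
      (∀ a (h : P a → X) (u : P a), d a h = h u) ∧
      (∀ a : A, ∀ x y : X, (P a → x = y) → x = y)) := by
  constructor
  · intro hsheaf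
    have hb a := hsheaf (P a) (oracle_self P a)
    obtain ⟨d, hd⟩ := exists_descent_of_bijective_const hb
    exact ⟨d, hd, fun a x y hxy => (hb a).1 (funext hxy)⟩
  · rintro ⟨d, hd, hsep⟩ s hs
    exact ⟨fun x y hxy => hs.eq_of_separated hsep (congrFun hxy), hs.exists_const_eq hd hsep⟩
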